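/- arXiv:2507.23151 — 4 statements merged into one kernel-verified Lean document; each statement's English description precedes it below -/
import Mathlib

section
/- Let a, b, c, u, v be real numbers. Then the function n ↦ u·n + v is a pointwise upper bound over ℕ of the pushed function n ↦ (if n = 0 then c else a·(n−1) + b), i.e. for all n ∈ ℕ, (if n = 0 then c else a·(n−1) + b) ≤ u·n + v, if and only if c ≤ v, a ≤ u, and b ≤ u + v. -/
/-- Constraint-space characterisation of the abstract transfer function for `Push` on
affine bounds: `n ↦ u·n + v` bounds the pushed affine sequence iff `c ≤ v`, `a ≤ u`
and `b ≤ u + v`. -/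
theorem push_affine_characterisation (a b c u v : ℝ) :
    (∀ n : ℕ, (if n = 0 then c else a * ((n : ℝ) - 1) + b) ≤ u * n + v) ↔
      (c ≤ v ∧ a ≤ u ∧ b ≤ u + v) := by
  constructor
  · intro h
    have h0 := h 0
    simp at h0
    have h1 := h 1
    simp at h1
    refine ⟨h0, ?_, by linarith⟩
    by_contra hau
    push_neg at hau
    obtain ⟨n, hn⟩ := exists_nat_gt ((u + v - b) / (a - u))
    have hkey := h (n + 1)
    simp at hkey
    push_cast at hkey
    have : (u + v - b) / (a - u) < n := hn
    have h2 : u + v - b < (a - u) * n := by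
      rw [div_lt_iff₀ (by linarith)] at this
      linarith [this]
    nlinarith
  · rintro ⟨h1, h2, h3⟩ n
    rcases Nat.eq_zero_or_pos n with h | h
    · simp [h]; linarith
    · have hn : (1 : ℝ) ≤ n := by exact_mod_cast h
      rw [if_neg (Nat.pos_iff_ne_zero.mp h)]
      nlinarith
end

section
/- Let a, b, c, u, v be real numbers with b − a ≤ c. Then (if n = 0 then c else a·(n−1) + b) ≤ u·n + v holds for all n ∈ ℕ if and only if a ≤ u and c ≤ v. In other words, when c ≥ b − a, the set of affine upper bounds (u, v) of the pushed affine function is exactly the coordinate-wise up-set of the single generator (a, c). -/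
/-- When `c ≥ b − a`, the affine upper bounds of the pushed affine function are exactly
the coordinate-wise up-set of the single generator `(a, c)`. -/
theorem push_affine_single_generator (a b c u v : ℝ) (h : b - a ≤ c) :
    (∀ n : ℕ, (if n = 0 then c else a * ((n : ℝ) - 1) + b) ≤ u * n + v) ↔
      (a ≤ u ∧ c ≤ v) := by
  constructor
  · intro H
    constructor
    · by_contra hau
      push_neg at hau
      obtain ⟨n, hn⟩ := exists_nat_gt (max 1 ((v - (b - a)) / (a - u)))
      have hn1 : (1 : ℝ) ≤ n := le_of_lt (lt_of_le_of_lt (le_max_left _ _) hn)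
      have hn0 : n ≠ 0 := by
        intro h0; rw [h0] at hn1; norm_num at hn1
      have := H n
      rw [if_neg hn0] at this
      have h2 : a * ((n : ℝ) - 1) + b = a * n + (b - a) := by ring
      rw [h2] at this
      have h3 : (v - (b - a)) / (a - u) < n :=
        lt_of_le_of_lt (le_max_right _ _) hn
      have h4 : 0 < a - u := by linarith
      rw [div_lt_iff₀ h4] at h3
      nlinarith
    · have := H 0
      simpa using this
  · rintro ⟨hau, hcv⟩ n
    cases n with
    | zero => simpa using hcv
    | succ m =>
      rw [if_neg (Nat.succ_ne_zero m)]
      have hm : (1 : ℝ) ≤ (m + 1 : ℕ) := by push_cast; linarith [Nat.cast_nonneg (α := ℝ) m]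
      have : a * ((m + 1 : ℕ) : ℝ) + (b - a) ≤ u * ((m + 1 : ℕ) : ℝ) + v := by
        nlinarith
      linarith [this]
end

section
/- Let a, b, c be real numbers with c < b − a. Then the set {(u, v) ∈ ℝ² | c ≤ v ∧ a ≤ u ∧ b ≤ u + v} (the set of parameters of affine upper bounds of the pushed affine function) equals the upward closure, for the coordinate-wise order on ℝ², of the convex hull of the two generator points (a, b − a) and (b − c, c): that is, (u, v) satisfies the three inequalities if and only if there exists a point (p, q) in the convex hull (over ℝ) of {(a, b − a), (b − c, c)} with p ≤ u and q ≤ v. -/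
/-- When `c < b − a`, the set of parameters of affine upper bounds of the pushed affine
function is the upward closure (coordinate-wise order on `ℝ²`) of the convex hull of the
two generators `(a, b − a)` and `(b − c, c)`. -/
theorem push_affine_two_generators (a b c : ℝ) (h : c < b - a) :
    ∀ u v : ℝ,
      (c ≤ v ∧ a ≤ u ∧ b ≤ u + v) ↔
        ∃ q ∈ convexHull ℝ ({(a, b - a), (b - c, c)} : Set (ℝ × ℝ)),
          q.1 ≤ u ∧ q.2 ≤ v := by
  intro u v
  have hd : (0:ℝ) < b - a - c := by linarith
  rw [convexHull_pair]
  constructor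
  · rintro ⟨hc, ha, hb⟩
    set t : ℝ := max 0 ((b - a - v) / (b - a - c)) with ht
    have ht0 : 0 ≤ t := le_max_left _ _
    have ht1 : t ≤ 1 := by
      apply max_le (by norm_num)
      rw [div_le_one hd]; linarith
    have htv : b - a - v ≤ t * (b - a - c) := by
      have : (b - a - v) / (b - a - c) ≤ t := le_max_right _ _
      calc b - a - v = ((b - a - v) / (b - a - c)) * (b - a - c) := by
            field_simp
        _ ≤ t * (b - a - c) := by nlinarith
    have htu : t * (b - a - c) ≤ u - a := by
      rcases le_or_gt ((b - a - v) / (b - a - c)) 0 with h0 | h0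
      · have : t = 0 := by simp [ht, h0]
        rw [this]; linarith
      · have : t = (b - a - v) / (b - a - c) := by
          simp [ht, h0.le]
        rw [this]
        have : (b - a - v) / (b - a - c) * (b - a - c) = b - a - v := by
          field_simp
        rw [this]; linarith
    refine ⟨(a + t * (b - a - c), b - a - t * (b - a - c)), ?_, by simp; linarith,
      by simp; linarith⟩
    refine ⟨1 - t, t, by linarith, ht0, by ring, ?_⟩
    simp [Prod.ext_iff, Prod.smul_def, smul_eq_mul]
    constructor <;> ring
  · rintro ⟨q, ⟨s, t, hs, htt, hst, hq⟩, hqu, hqv⟩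
    have hq1 : q.1 = s * a + t * (b - c) := by rw [← hq]; simp [smul_eq_mul]
    have hq2 : q.2 = s * (b - a) + t * c := by rw [← hq]; simp [smul_eq_mul]
    have hts : t = 1 - s := by linarith
    have e1 : q.1 - a = t * (b - a - c) := by rw [hq1, hts]; ring
    have e2 : q.2 - c = s * (b - a - c) := by rw [hq2, hts]; ring
    have e3 : q.1 + q.2 = b := by rw [hq1, hq2, hts]; ring
    refine ⟨?_, ?_, ?_⟩
    · nlinarith [mul_nonneg hs hd.le]
    · nlinarith [mul_nonneg htt hd.le]
    · linarith
end

section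
/- Let d ∈ ℕ, x ∈ ℝ, and let a, p : ℕ → ℝ be coefficient vectors satisfying: x ≤ p₀; aₖ ≤ pₖ + p_{k+1} for every k < d; and a_d ≤ p_d. Then for every natural number n: (if n = 0 then x else ∑_{k=0}^{d} aₖ·C(n−1,k)) ≤ ∑_{k=0}^{d} pₖ·C(n,k). That is, these coefficient inequalities give a sound abstract transfer function for the Push construct on polynomial bounds of degree at most d written in the binomial basis. -/
/-- Soundness of the abstract transfer function for `Push` on polynomial bounds of degree
at most `d` in the binomial basis. -/
theorem push_binomial_sound (d : ℕ) (x : ℝ) (a p : ℕ → ℝ)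
    (h0 : x ≤ p 0) (hk : ∀ k < d, a k ≤ p k + p (k + 1)) (hd : a d ≤ p d) :
    ∀ n : ℕ,
      (if n = 0 then x else ∑ k ∈ Finset.range (d + 1), a k * (Nat.choose (n - 1) k : ℝ)) ≤
        ∑ k ∈ Finset.range (d + 1), p k * (Nat.choose n k : ℝ) := by
  intro n
  cases n with
  | zero =>
    simp only [if_pos rfl]
    have hs : ∑ k ∈ Finset.range (d + 1), p k * (Nat.choose 0 k : ℝ) = p 0 := by
      rw [Finset.sum_eq_single 0]
      · simp
      · intro b _ hb
        rw [Nat.choose_eq_zero_of_lt (Nat.pos_of_ne_zero hb)]; simp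
      · simp
    rw [hs]; exact h0
  | succ m =>
    rw [if_neg (Nat.succ_ne_zero m)]
    simp only [Nat.succ_sub_one]
    have hrhs : ∑ k ∈ Finset.range (d + 1), p k * (Nat.choose (m + 1) k : ℝ)
        = (∑ k ∈ Finset.range d, (p k + p (k + 1)) * (Nat.choose m k : ℝ))
          + p d * (Nat.choose m d : ℝ) := by
      rw [Finset.sum_range_succ' (fun k => p k * (Nat.choose (m + 1) k : ℝ))]
      have h2 : (∑ k ∈ Finset.range d, (p k + p (k + 1)) * (Nat.choose m k : ℝ))
          + p d * (Nat.choose m d : ℝ)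
          = (∑ k ∈ Finset.range (d + 1), p k * (Nat.choose m k : ℝ))
            + ∑ k ∈ Finset.range d, p (k + 1) * (Nat.choose m k : ℝ) := by
        rw [Finset.sum_range_succ (fun k => p k * (Nat.choose m k : ℝ))]
        simp only [add_mul, Finset.sum_add_distrib]
        ring
      rw [h2, Finset.sum_range_succ' (fun k => p k * (Nat.choose m k : ℝ))]
      simp only [Nat.choose_succ_succ, Nat.choose_zero_right, Nat.cast_add, Nat.cast_one,
        Nat.succ_eq_add_one, mul_add, Finset.sum_add_distrib]
      ring
    rw [hrhs, Finset.sum_range_succ]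
    refine add_le_add (Finset.sum_le_sum fun i hi => ?_)
      (mul_le_mul_of_nonneg_right hd (Nat.cast_nonneg _))
    exact mul_le_mul_of_nonneg_right (hk i (Finset.mem_range.mp hi)) (Nat.cast_nonneg _)
end
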